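/- Let K be a self-similar compact set of module μ and ratio ρ. Then the derived set K' is also a self-similar compact set of module μ and ratio ρ, i.e., K' is compact, well-ordered by the reverse order with order type ω^ω + 1, and ρ·(K')^(μ) = K'. -/

import Mathlib

open Ordinal Filter Topology Set

/-- The `n`-th derived set of `A ⊆ ℝ`. -/
noncomputable def iterDeriv (A : Set ℝ) (n : ℕ) : Set ℝ := (derivedSet (X := ℝ))^[n] A

/-- The ordinal `ω ^ ω`. -/
noncomputable def wOmega : Ordinal.{0} := Ordinal.omega0 ^ Ordinal.omega0

/-- An enumeration of `K ⊆ ℝ` witnessing that `K`, with the reverse of the usual order,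
is well-ordered with order type `ω ^ ω + 1`: its elements are exactly `e α` for
`α ≤ ω ^ ω`, and the enumeration is strictly order-reversing. `e α` is the element
written `K[α]`. -/
structure OrdEnum (K : Set ℝ) where
  e : Ordinal.{0} → ℝ
  mem : ∀ α ≤ wOmega, e α ∈ K
  surj : ∀ x ∈ K, ∃ α ≤ wOmega, e α = x
  anti : ∀ ⦃α β : Ordinal.{0}⦄, α ≤ wOmega → β ≤ wOmega → (α < β ↔ e β < e α)

/-- An enumeration of a set `S ⊆ ℝ` of reverse-order type `ω ^ ω` (indices `α < ω ^ ω`),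
strictly order-reversing; `e α` is the element written `S[α]`. -/
structure SubEnum (S : Set ℝ) where
  e : Ordinal.{0} → ℝ
  mem : ∀ α < wOmega, e α ∈ S
  surj : ∀ x ∈ S, ∃ α < wOmega, e α = x
  anti : ∀ ⦃α β : Ordinal.{0}⦄, α < wOmega → β < wOmega → (α < β ↔ e β < e α)

/-- A self-similar compact set of ratio `ρ > 1` and module `μ ≥ 1`:
a compact `K ⊆ [0, ∞)`, well-ordered by the reverse usual order with order
type `ω ^ ω + 1`, satisfying `ρ • K^(μ) = K`. -/
def SelfSimilar (K : Set ℝ) (ρ : ℝ) (μ : ℕ) : Prop :=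
  IsCompact K ∧ K ⊆ Set.Ici 0 ∧ 1 < ρ ∧ 1 ≤ μ ∧
    (fun x => ρ * x) '' iterDeriv K μ = K ∧ Nonempty (OrdEnum K)


/-! Multiplication by `ρ ≠ 0` is a homeomorphism of `ℝ`, so it commutes with taking derived sets,
and `ρ · (K')^(μ) = (ρ · K^(μ))' = K'`. For the order type: a point `K[α]` is a limit point of `K`
exactly when `α` is a limit ordinal — the infimum of the `K[β]`, `β < α`, lies in the closed set `K`
and must be `K[α]`, while for any other `γ` the point `K[γ]` is isolated, separated from `K[γ + 1]`
and from its predecessor. The nonzero limit ordinals `≤ ω ^ ω` are enumerated increasingly by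
`α ↦ ω * (1 + α)`, `α ≤ ω ^ ω`, because `ω * ω ^ ω = ω ^ ω`. -/

lemma Homeomorph.image_derivedSet {X Y : Type*} [TopologicalSpace X] [TopologicalSpace Y]
    (g : X ≃ₜ Y) (A : Set X) : g '' derivedSet A = derivedSet (g '' A) := by
  refine (g.continuous.image_derivedSet g.injective).antisymm fun y hy => ⟨g.symm y, ?_, by simp⟩
  simpa [image_image] using g.symm.continuous.image_derivedSet g.symm.injective ⟨y, hy, rfl⟩

lemma iterDeriv_derivedSet (A : Set ℝ) (n : ℕ) :
    iterDeriv (derivedSet A) n = derivedSet (iterDeriv A n) := by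
  rw [iterDeriv, iterDeriv, ← Function.iterate_succ_apply, Function.iterate_succ_apply']

lemma notMem_derivedSet_of_Ioo {K : Set ℝ} {a x b : ℝ} (hax : a < x) (hxb : x < b)
    (h : ∀ y ∈ K, y ∈ Ioo a b → y = x) : x ∉ derivedSet K := by
  intro hx
  rw [mem_derivedSet, accPt_iff_nhds] at hx
  obtain ⟨y, ⟨hyI, hyK⟩, hyx⟩ := hx _ (Ioo_mem_nhds hax hxb)
  exact hyx (h y hyK hyI)

namespace Ordinal

lemma isSuccLimit_wOmega : Order.IsSuccLimit wOmega :=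
  isSuccLimit_opow one_lt_omega0 isSuccLimit_omega0

/-- The `α`-th nonzero limit ordinal. -/
noncomputable def nthLimit (α : Ordinal.{0}) : Ordinal.{0} := ω * (1 + α)

lemma nthLimit_strictMono : StrictMono nthLimit := fun _ _ h =>
  (mul_lt_mul_iff_right₀ omega0_pos).2 (add_lt_add_right h 1)

lemma nthLimit_wOmega : nthLimit wOmega = wOmega := by
  rw [nthLimit, wOmega, one_add_of_omega0_le (left_le_opow ω omega0_pos), ← opow_one_add,
    one_add_omega0]

lemma nthLimit_le_wOmega_iff {α : Ordinal.{0}} : nthLimit α ≤ wOmega ↔ α ≤ wOmega := by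
  conv_lhs => rw [← nthLimit_wOmega]
  exact nthLimit_strictMono.le_iff_le

lemma isSuccLimit_nthLimit (α : Ordinal.{0}) : Order.IsSuccLimit (nthLimit α) :=
  isSuccLimit_mul_left isSuccLimit_omega0 (lt_of_lt_of_le zero_lt_one le_self_add)

lemma exists_nthLimit_eq {γ : Ordinal.{0}} (h : Order.IsSuccLimit γ) : ∃ α, nthLimit α = γ := by
  obtain ⟨hγ, c, rfl⟩ := isSuccLimit_iff.1 h |>.imp_right isSuccPrelimit_iff_omega0_dvd.1
  have hc : 1 ≤ c := Order.one_le_iff_ne_zero.2 (by rintro rfl; simp at hγ)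
  exact ⟨c - 1, by rw [nthLimit, Ordinal.add_sub_cancel_of_le hc]⟩

end Ordinal

open Ordinal

namespace OrdEnum

variable {K : Set ℝ} (E : OrdEnum K)

lemma image_Iio_subset {α : Ordinal.{0}} (hα : α ≤ wOmega) : E.e '' Iio α ⊆ K := by
  rintro _ ⟨β, hβ, rfl⟩
  exact E.mem β (hβ.le.trans hα)

lemma isGLB_image_Iio (hK : IsClosed K) {α : Ordinal.{0}} (hα : α ≤ wOmega)
    (hlim : Order.IsSuccLimit α) : IsGLB (E.e '' Iio α) (E.e α) := by
  have hne : (E.e '' Iio α).Nonempty := ⟨_, 0, hlim.bot_lt, rfl⟩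
  have hlow : E.e α ∈ lowerBounds (E.e '' Iio α) := by
    rintro _ ⟨β, hβ, rfl⟩
    exact ((E.anti (hβ.le.trans hα) hα).1 hβ).le
  have hglb := isGLB_csInf hne ⟨_, hlow⟩
  obtain ⟨γ, hγ, hγinf⟩ :=
    E.surj _ (hK.closure_subset (closure_mono (E.image_Iio_subset hα) (hglb.mem_closure hne)))
  suffices E.e γ ≤ E.e α by rwa [← le_antisymm (hγinf ▸ this) (le_csInf hne hlow)]
  -- the infimum cannot be `K[γ]` with `γ < α`, since `K[γ + 1]` is smaller and still in the set
  rw [← not_lt, ← E.anti hγ hα]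
  intro hγα
  have hsucc := hlim.succ_lt hγα
  have hle : sInf (E.e '' Iio α) ≤ E.e (Order.succ γ) := hglb.1 ⟨_, hsucc, rfl⟩
  rw [← hγinf] at hle
  exact hle.not_gt ((E.anti hγ (hsucc.le.trans hα)).1 (Order.lt_succ γ))

lemma mem_derivedSet_of_isSuccLimit (hK : IsClosed K) {α : Ordinal.{0}} (hα : α ≤ wOmega)
    (hlim : Order.IsSuccLimit α) : E.e α ∈ derivedSet K := by
  have hcl := (E.isGLB_image_Iio hK hα hlim).mem_closure ⟨_, 0, hlim.bot_lt, rfl⟩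
  rw [closure_eq_self_union_derivedSet] at hcl
  refine derivedSet_mono _ _ (E.image_Iio_subset hα) (hcl.resolve_left ?_)
  rintro ⟨β, hβ, hβα⟩
  exact ((E.anti (hβ.le.trans hα) hα).1 hβ).ne' hβα

lemma notMem_derivedSet_of_not_isSuccLimit {γ : Ordinal.{0}} (hγ : γ ≤ wOmega)
    (hlim : ¬ Order.IsSuccLimit γ) : E.e γ ∉ derivedSet K := by
  have hsucc : Order.succ γ ≤ wOmega :=
    (isSuccLimit_wOmega.succ_lt (hγ.lt_of_ne (by rintro rfl; exact hlim isSuccLimit_wOmega))).le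
  obtain ⟨b, hb, hb_le⟩ : ∃ b, E.e γ < b ∧ ∀ η ≤ wOmega, E.e η < b → γ ≤ η := by
    rcases zero_or_succ_or_isSuccLimit γ with rfl | ⟨δ, rfl⟩ | h
    · exact ⟨E.e 0 + 1, lt_add_one _, fun η _ _ => bot_le⟩
    · have hδ := (Order.le_succ δ).trans hγ
      exact ⟨E.e δ, (E.anti hδ hγ).1 (Order.lt_succ δ),
        fun η hη h => Order.succ_le_of_lt ((E.anti hδ hη).2 h)⟩
    · exact absurd h hlim
  refine notMem_derivedSet_of_Ioo ((E.anti hγ hsucc).1 (Order.lt_succ γ)) hb ?_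
  rintro _ hyK ⟨hy₁, hy₂⟩
  obtain ⟨η, hη, rfl⟩ := E.surj _ hyK
  have hηγ := Order.lt_succ_iff.1 ((E.anti hη hsucc).2 hy₁)
  rw [le_antisymm hηγ (hb_le η hη hy₂)]

noncomputable def derived (hK : IsClosed K) : OrdEnum (derivedSet K) where
  e α := E.e (nthLimit α)
  mem α hα :=
    E.mem_derivedSet_of_isSuccLimit hK (nthLimit_le_wOmega_iff.2 hα) (isSuccLimit_nthLimit α)
  surj x hx := by
    obtain ⟨γ, hγ, rfl⟩ := E.surj x (hK.closure_subset (derivedSet_subset_closure K hx))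
    by_cases hlim : Order.IsSuccLimit γ
    · obtain ⟨α, rfl⟩ := exists_nthLimit_eq hlim
      exact ⟨α, nthLimit_le_wOmega_iff.1 hγ, rfl⟩
    · exact absurd hx (E.notMem_derivedSet_of_not_isSuccLimit hγ hlim)
  anti _ _ hα hβ := nthLimit_strictMono.lt_iff_lt.symm.trans
    (E.anti (nthLimit_le_wOmega_iff.2 hα) (nthLimit_le_wOmega_iff.2 hβ))

end OrdEnum

theorem selfSimilar_derivedSet (K : Set ℝ) (ρ : ℝ) (μ : ℕ)
    (h : SelfSimilar K ρ μ) : SelfSimilar (derivedSet K) ρ μ := by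
  obtain ⟨hcomp, hnonneg, hρ, hμ, himg, ⟨E⟩⟩ := h
  have hsub : derivedSet K ⊆ K := (isClosed_iff_derivedSet_subset K).1 hcomp.isClosed
  refine ⟨hcomp.of_isClosed_subset (isClosed_derivedSet K) hsub, hsub.trans hnonneg, hρ, hμ, ?_,
    ⟨E.derived hcomp.isClosed⟩⟩
  have hρ0 : ρ ≠ 0 := by positivity
  rw [iterDeriv_derivedSet, ← Homeomorph.coe_mulLeft₀ ρ hρ0, Homeomorph.image_derivedSet,
    Homeomorph.coe_mulLeft₀, himg]
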